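/- Fix n ∈ ℕ, let G = (ℤ/2)^n, let ε : F2[G] → F2 be the augmentation ring homomorphism sending each group element to 1 (i.e., taking the sum of coefficients), and let 𝓘 = ker ε be the augmentation ideal. For A ⊆ {1,…,n} let ξ_A = Σ_{g ∈ G_A} g, where G_A is the subgroup generated by {x_i : i ∈ A}. Then for every m ≥ 1, the m-th power 𝓘^m of the augmentation ideal equals the F2-linear span of { ξ_A : |A| ≥ m }. -/

import Mathlib

/-- The group `G = (ℤ/2)ⁿ`, written multiplicatively. -/
abbrev GrpG (n : ℕ) : Type := Multiplicative (Fin n → ZMod 2)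

/-- The `i`-th generator `x_i` of `G = (ℤ/2)ⁿ`. -/
def xgen {n : ℕ} (i : Fin n) : GrpG n := Multiplicative.ofAdd (Pi.single i 1)

/-- The subgroup `G_A ≤ G` generated by `{x_i : i ∈ A}`. -/
def GA {n : ℕ} (A : Finset (Fin n)) : Subgroup (GrpG n) :=
  Subgroup.closure (xgen '' (A : Set (Fin n)))

open scoped Classical in
/-- The element `ξ_A = ∑_{g ∈ G_A} g` of the group algebra `F2[G]`. -/
noncomputable def xiA {n : ℕ} (A : Finset (Fin n)) : MonoidAlgebra (ZMod 2) (GrpG n) :=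
  ∑ g ∈ ((GA A : Set (GrpG n)).toFinset), MonoidAlgebra.of (ZMod 2) (GrpG n) g

/-- The augmentation homomorphism `ε : F2[G] → F2` sending every group element to `1`. -/
noncomputable def aug (n : ℕ) : MonoidAlgebra (ZMod 2) (GrpG n) →ₐ[ZMod 2] ZMod 2 :=
  MonoidAlgebra.lift (ZMod 2) (ZMod 2) (GrpG n) 1

/-- The augmentation ideal `𝓘 = ker ε` of the group algebra `F2[(ℤ/2)ⁿ]`. -/
noncomputable def augIdeal (n : ℕ) : Ideal (MonoidAlgebra (ZMod 2) (GrpG n)) :=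
  RingHom.ker (aug n)

/-!
Writing `y_i = x_i + 1 ∈ 𝓘`, the subgroup `G_A` consists of the products `∏_{i ∈ T} x_i` for
`T ⊆ A`, all distinct, so `ξ_A = ∏_{i ∈ A} (1 + x_i) = ∏_{i ∈ A} y_i`. In characteristic two
`y_i² = x_i² + 1 = 0`, hence `ξ_A ξ_B` is `ξ_{A ∪ B}` for disjoint `A, B` and `0` otherwise: the
spans `V_m` of the `ξ_A` with `|A| ≥ m` satisfy `V_a V_b ⊆ V_{a+b}`. Expanding
`∏_{i ∈ T} x_i = ∏_{i ∈ T} (y_i + 1)` shows `V_0 = F₂[G]`, and comparing augmentations gives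
`V_1 = 𝓘`; so `𝓘^m ⊆ V_m` by induction, while `ξ_A` is a product of `|A|` elements of `𝓘`.
-/

open MonoidAlgebra Finset

instance MonoidAlgebra.charP_of_charP {k G : Type*} [CommRing k] [Monoid G] (p : ℕ) [CharP k p] :
    CharP (MonoidAlgebra k G) p :=
  charP_of_injective_algebraMap' k p

namespace GrpG

variable {n : ℕ}

lemma mul_self_eq_one (g : GrpG n) : g * g = 1 :=
  Multiplicative.toAdd.injective <| funext fun _ => CharTwo.add_self_eq_zero _

def xgenProd (T : Finset (Fin n)) : GrpG n := ∏ i ∈ T, xgen i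

lemma toAdd_xgenProd_apply (T : Finset (Fin n)) (j : Fin n) :
    Multiplicative.toAdd (xgenProd T) j = if j ∈ T then 1 else 0 := by
  simp [xgenProd, xgen, toAdd_prod, Finset.sum_apply, Pi.single_apply]

lemma xgenProd_injective : Function.Injective (xgenProd (n := n)) := by
  intro T U h
  ext j
  have hj := congr_fun (congrArg Multiplicative.toAdd h) j
  simp only [toAdd_xgenProd_apply] at hj
  split_ifs at hj <;> simp_all

lemma exists_xgenProd_eq {A : Finset (Fin n)} {g : GrpG n}
    (hg : ∀ j ∉ A, Multiplicative.toAdd g j = 0) : ∃ T ⊆ A, xgenProd T = g := by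
  refine ⟨A.filter (Multiplicative.toAdd g · ≠ 0), filter_subset _ _, ?_⟩
  refine Multiplicative.toAdd.injective <| funext fun j => ?_
  rw [toAdd_xgenProd_apply]
  by_cases hjA : j ∈ A
  · have hZMod2 : ∀ x : ZMod 2, x ≠ 0 → x = 1 := by decide
    by_cases hgj : Multiplicative.toAdd g j = 0 <;> simp [hjA, hgj, hZMod2]
  · simp [hjA, hg j hjA]

lemma mem_GA_iff {A : Finset (Fin n)} {g : GrpG n} :
    g ∈ GA A ↔ ∃ T ⊆ A, xgenProd T = g := by
  constructor
  · intro hg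
    refine exists_xgenProd_eq ?_
    induction hg using Subgroup.closure_induction with
    | mem x hx =>
      obtain ⟨i, hi, rfl⟩ := hx
      intro j hj
      simp [xgen, (ne_of_mem_of_not_mem hi hj).symm]
    | one => simp
    | mul x y _ _ hx hy => intro j hj; simp [hx j hj, hy j hj]
    | inv x _ hx => intro j hj; simp [hx j hj]
  · rintro ⟨T, hT, rfl⟩
    exact Subgroup.prod_mem _ fun i hi => Subgroup.subset_closure ⟨i, hT hi, rfl⟩

end GrpG

open GrpG

variable {n : ℕ}

lemma xiA_eq_sum_powerset (A : Finset (Fin n)) :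
    xiA A = ∑ T ∈ A.powerset, of (ZMod 2) (GrpG n) (xgenProd T) := by
  classical
  have hGA : (GA A : Set (GrpG n)).toFinset = A.powerset.image xgenProd := by
    ext g
    simp [mem_GA_iff]
  rw [xiA, hGA, sum_image xgenProd_injective.injOn]

lemma xiA_eq_prod (A : Finset (Fin n)) :
    xiA A = ∏ i ∈ A, (of (ZMod 2) (GrpG n) (xgen i) + 1) := by
  simp [prod_add, xiA_eq_sum_powerset, xgenProd]

lemma of_add_one_sq (g : GrpG n) : (of (ZMod 2) (GrpG n) g + 1) ^ 2 = 0 := by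
  rw [CharTwo.add_sq, sq, ← map_mul, mul_self_eq_one, map_one, one_pow,
    CharTwo.add_self_eq_zero]

lemma xiA_mul_xiA_of_disjoint {A B : Finset (Fin n)} (h : Disjoint A B) :
    xiA A * xiA B = xiA (A ∪ B) := by
  rw [xiA_eq_prod, xiA_eq_prod, xiA_eq_prod, prod_union h]

lemma xiA_mul_xiA_of_not_disjoint {A B : Finset (Fin n)} (h : ¬Disjoint A B) :
    xiA A * xiA B = 0 := by
  obtain ⟨i, hiA, hiB⟩ := not_disjoint_iff.1 h
  set y : Fin n → MonoidAlgebra (ZMod 2) (GrpG n) := fun j => of (ZMod 2) (GrpG n) (xgen j) + 1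
  calc xiA A * xiA B = (y i * ∏ j ∈ A.erase i, y j) * (y i * ∏ j ∈ B.erase i, y j) := by
        rw [xiA_eq_prod, xiA_eq_prod, mul_prod_erase A y hiA, mul_prod_erase B y hiB]
    _ = y i ^ 2 * ((∏ j ∈ A.erase i, y j) * ∏ j ∈ B.erase i, y j) := by ring
    _ = 0 := by rw [of_add_one_sq, zero_mul]

lemma of_xgenProd_eq_sum_xiA (T : Finset (Fin n)) :
    of (ZMod 2) (GrpG n) (xgenProd T) = ∑ U ∈ T.powerset, xiA U := by
  calc of (ZMod 2) (GrpG n) (xgenProd T)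
      = ∏ i ∈ T, ((of (ZMod 2) (GrpG n) (xgen i) + 1) + 1) := by
        rw [xgenProd, map_prod]
        refine prod_congr rfl fun i _ => ?_
        rw [add_assoc, CharTwo.add_self_eq_zero, add_zero]
    _ = ∑ U ∈ T.powerset, xiA U := by simp [prod_add, xiA_eq_prod]

lemma aug_of_add_one (g : GrpG n) : aug n (of (ZMod 2) (GrpG n) g + 1) = 0 := by
  rw [map_add, aug, lift_of, map_one]
  exact CharTwo.add_self_eq_zero 1

lemma aug_xiA {A : Finset (Fin n)} (hA : A.Nonempty) : aug n (xiA A) = 0 := by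
  obtain ⟨i, hi⟩ := hA
  rw [xiA_eq_prod, map_prod]
  exact prod_eq_zero hi (aug_of_add_one _)

lemma xiA_mem_augIdeal_pow {m : ℕ} {A : Finset (Fin n)} (hA : m ≤ A.card) :
    xiA A ∈ augIdeal n ^ m := by
  refine Ideal.pow_le_pow_right hA ?_
  rw [xiA_eq_prod, ← prod_const]
  exact Ideal.prod_mem_prod fun i _ => aug_of_add_one (xgen i)

noncomputable def xiSpan (n m : ℕ) : Submodule (ZMod 2) (MonoidAlgebra (ZMod 2) (GrpG n)) :=
  Submodule.span (ZMod 2) {a | ∃ A : Finset (Fin n), m ≤ A.card ∧ xiA A = a}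

lemma xiSpan_mul_le (a b : ℕ) : xiSpan n a * xiSpan n b ≤ xiSpan n (a + b) := by
  rw [xiSpan, xiSpan, Submodule.span_mul_span, Submodule.span_le]
  rintro _ ⟨_, ⟨A, hA, rfl⟩, _, ⟨B, hB, rfl⟩, rfl⟩
  change xiA A * xiA B ∈ xiSpan n (a + b)
  by_cases h : Disjoint A B
  · rw [xiA_mul_xiA_of_disjoint h]
    exact Submodule.subset_span ⟨A ∪ B, by rw [card_union_of_disjoint h]; omega, rfl⟩
  · rw [xiA_mul_xiA_of_not_disjoint h]
    exact zero_mem _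

lemma xiSpan_zero : xiSpan n 0 = ⊤ := by
  refine eq_top_iff.2 fun a _ => a.induction_on (fun g => ?_)
    (fun _ _ => add_mem) (fun c _ => Submodule.smul_mem _ c)
  obtain ⟨T, -, rfl⟩ := exists_xgenProd_eq (A := univ) (g := g) (by simp)
  rw [of_xgenProd_eq_sum_xiA]
  exact sum_mem fun U _ => Submodule.subset_span ⟨U, Nat.zero_le _, rfl⟩

lemma xiSpan_one : xiSpan n 1 = (augIdeal n).restrictScalars (ZMod 2) := by
  have hle : xiSpan n 1 ≤ (augIdeal n).restrictScalars (ZMod 2) := by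
    rw [xiSpan, Submodule.span_le]
    rintro _ ⟨A, hA, rfl⟩
    exact aug_xiA (card_pos.1 hA)
  refine le_antisymm hle fun a ha => ?_
  -- `ξ_∅ = 1`, so `V_0` is spanned by `1` and `V_1`.
  have hspan : a ∈ Submodule.span (ZMod 2)
      (insert 1 {a | ∃ A : Finset (Fin n), 1 ≤ A.card ∧ xiA A = a}) := by
    refine Submodule.span_mono ?_ (xiSpan_zero (n := n) ▸ Submodule.mem_top)
    rintro _ ⟨A, -, rfl⟩
    rcases A.eq_empty_or_nonempty with rfl | hA
    · exact Or.inl (by simp [xiA_eq_prod])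
    · exact Or.inr ⟨A, card_pos.2 hA, rfl⟩
  obtain ⟨c, z, hz, rfl⟩ := Submodule.mem_span_insert.1 hspan
  have hc : c = 0 := by
    have haug : aug n (c • 1 + z) = 0 := ha
    rwa [map_add, map_smul, map_one, smul_eq_mul, mul_one, show aug n z = 0 from hle hz,
      add_zero] at haug
  rwa [hc, zero_smul, zero_add]

lemma augIdeal_pow_le_xiSpan (m : ℕ) :
    (augIdeal n ^ m).restrictScalars (ZMod 2) ≤ xiSpan n m := by
  induction m with
  | zero => rw [xiSpan_zero]; exact le_top
  | succ k ih =>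
    intro x hx
    rw [Submodule.restrictScalars_mem, pow_succ] at hx
    refine Submodule.mul_induction_on hx (fun a ha b hb => ?_) fun _ _ => add_mem
    exact xiSpan_mul_le k 1 <| Submodule.mul_mem_mul (ih ha) (xiSpan_one (n := n) ▸ hb)

theorem stmt13_general {n : ℕ} (m : ℕ) :
    Submodule.restrictScalars (ZMod 2) (augIdeal n ^ m) =
      Submodule.span (ZMod 2)
        {a : MonoidAlgebra (ZMod 2) (GrpG n) |
          ∃ A : Finset (Fin n), m ≤ A.card ∧ xiA A = a} := by
  refine le_antisymm (augIdeal_pow_le_xiSpan m) (Submodule.span_le.2 ?_)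
  rintro _ ⟨A, hA, rfl⟩
  exact xiA_mem_augIdeal_pow hA

/-- For every `m ≥ 1`, the `m`-th power of the augmentation ideal of `F2[(ℤ/2)ⁿ]`
equals the `F2`-linear span of `{ ξ_A : |A| ≥ m }`. -/
theorem stmt13 {n : ℕ} (m : ℕ) (hm : 1 ≤ m) :
    Submodule.restrictScalars (ZMod 2) (augIdeal n ^ m) =
      Submodule.span (ZMod 2)
        {a : MonoidAlgebra (ZMod 2) (GrpG n) |
          ∃ A : Finset (Fin n), m ≤ A.card ∧ xiA A = a} :=
  stmt13_general m
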